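/- arXiv:1805.12047 — 2 statements merged into one kernel-verified Lean document; each statement's English description precedes it below -/
import Mathlib

section
/- Let μ be non-degenerate in degree d ≥ 1. With F(x,y) = det(xy M_{d−1} − (x+y)M'_{d−1} + M''_{d−1}), e_d the last standard basis vector in ℝ^d, and c = (−1)^d det(M_d)/det(M_{d−1})², the identity (x − y)·F(x,y) = c·det of the (2d+1)×(2d+1) block matrix [[ (det M_{d−1}/det M_d)(x−y), e_d^T, e_d^T ], [ e_d, x M_{d−1} − M'_{d−1}, 0 ], [ e_d, 0, −y M_{d−1} + M'_{d−1} ]] holds as polynomials in ℝ[x,y]. -/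
open MeasureTheory Polynomial

/-- The k-th moment of a measure on ℝ. -/
noncomputable def mom (μ : Measure ℝ) (k : ℕ) : ℝ := ∫ t, t ^ k ∂μ

/-- Non-degeneracy in degree d: moments up to degree 2d exist and
∫ f dμ > 0 for every nonzero nonnegative polynomial of degree ≤ 2d. -/
def NonDeg (μ : Measure ℝ) (d : ℕ) : Prop :=
  (∀ k ≤ 2 * d, Integrable (fun t => t ^ k) μ) ∧
  ∀ f : Polynomial ℝ, f ≠ 0 → f.natDegree ≤ 2 * d → (∀ x, 0 ≤ f.eval x) →
    0 < ∫ t, f.eval t ∂μ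

/-- Evaluation of a polynomial at a node in ℝ ∪ {∞}: at `some a` it is `f(a)`;
at `none` (infinity) it is the coefficient of degree D. -/
noncomputable def ev (D : ℕ) (x : Option ℝ) (f : Polynomial ℝ) : ℝ :=
  x.elim (f.coeff D) (fun a => f.eval a)

/-- The d × d Hankel-type moment matrix with (i,j) entry m_{i+j+k} (0-based). -/
noncomputable def hank (μ : Measure ℝ) (d k : ℕ) : Matrix (Fin d) (Fin d) ℝ :=
  Matrix.of fun i j => mom μ ((i : ℕ) + (j : ℕ) + k)

/-!
Write `M, M', M''` for the three `d × d` Hankel blocks, `A = x M - M'` and `B = y M - M'`.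
Every row and column of `M'` except the last is a shifted row or column of `M`, so
`M'' - M' M⁻¹ M' = s e eᵀ` with `e` the last basis vector and `s = det M_d / det M_{d-1}` the Schur
complement of `M_{d-1}` in `M_d`. Hence `x y M - (x + y) M' + M'' = A M⁻¹ B + s e eᵀ`. The matrix
determinant lemma and the resolvent identity `(x - y) B⁻¹ M A⁻¹ = B⁻¹ - A⁻¹` express the left-hand
side through `eᵀ A⁻¹ e` and `eᵀ B⁻¹ e`, and so does the Schur complement of `diag(A, -B)` in the
bordered matrix on the right. All this happens in the fraction field of `ℝ[x, y]`, where `A` and `B`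
are invertible because `x, y` are transcendental over `ℝ` and `M` is positive definite.
-/

open Matrix

theorem dotProduct_hank_mulVec {μ : Measure ℝ} {n : ℕ}
    (hint : ∀ i j : Fin n, Integrable (fun t => t ^ ((i : ℕ) + j)) μ) (v : Fin n → ℝ) :
    v ⬝ᵥ (hank μ n 0 *ᵥ v) = ∫ t, (∑ i, v i * t ^ (i : ℕ)) ^ 2 ∂μ := by
  have hexpand (t : ℝ) :
      (∑ i, v i * t ^ (i : ℕ)) ^ 2 = ∑ i, ∑ j, v i * v j * t ^ ((i : ℕ) + j) := by
    simp_rw [sq, Finset.sum_mul_sum, pow_add]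
    exact Finset.sum_congr rfl fun i _ => Finset.sum_congr rfl fun j _ => by ring
  simp_rw [hexpand]
  rw [integral_finsetSum _ fun i _ => integrable_finsetSum _ fun j _ => (hint i j).const_mul _]
  simp_rw [integral_finsetSum _ fun j _ => (hint _ j).const_mul _, integral_const_mul]
  simp only [dotProduct, mulVec, hank, mom, of_apply, add_zero, Finset.mul_sum]
  exact Finset.sum_congr rfl fun i _ => Finset.sum_congr rfl fun j _ => by ring

theorem hank_posDef {μ : Measure ℝ} {d n : ℕ} (hnd : NonDeg μ d) (hn : n ≤ d + 1) :
    (hank μ n 0).PosDef := by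
  classical
  refine .of_dotProduct_mulVec_pos ?_ fun v hv => ?_
  · ext i j
    simp [hank, add_comm]
  rw [star_trivial, dotProduct_hank_mulVec fun i j => hnd.1 _ (by omega)]
  set p := ofFn n v
  have hp : p ≠ 0 := by simpa using (injective_ofFn n).ne hv
  have hdeg : p.natDegree < n :=
    ofFn_natDegree_lt (Nat.one_le_iff_ne_zero.2 (ne_zero_of_ofFn_ne_zero hp)) v
  have heval (t : ℝ) : (p * p).eval t = (∑ i, v i * t ^ (i : ℕ)) ^ 2 := by
    simp [p, ofFn_eq_sum_monomial, eval_finsetSum, sq]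
  simp_rw [← heval]
  exact hnd.2 _ (mul_ne_zero hp hp) (natDegree_mul_le.trans (by omega)) fun t => by
    rw [heval]; positivity

section BorderedBlockDiag

variable {R : Type*} [CommRing R] {ι : Type*} [Fintype ι] [DecidableEq ι]

def borderedBlockDiag (a : R) (e : ι → R) (A B : Matrix ι ι R) :
    Matrix (Unit ⊕ ι ⊕ ι) (Unit ⊕ ι ⊕ ι) R :=
  fromBlocks (of fun _ _ => a) (replicateRow Unit (Sum.elim e e))
    (replicateCol Unit (Sum.elim e e)) (fromBlocks A 0 0 (-B))

theorem det_borderedBlockDiag (a : R) (e : ι → R) {A B : Matrix ι ι R}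
    (hA : IsUnit A.det) (hB : IsUnit B.det) :
    (borderedBlockDiag a e A B).det =
      A.det * (-B).det * (a - e ⬝ᵥ (A⁻¹ *ᵥ e) + e ⬝ᵥ (B⁻¹ *ᵥ e)) := by
  have := A.invertibleOfIsUnitDet hA
  have := B.invertibleOfIsUnitDet hB
  have := invertibleNeg B
  have := fromBlocksZero₁₂Invertible A 0 (-B)
  rw [borderedBlockDiag, det_fromBlocks₂₂, det_fromBlocks_zero₁₂, invOf_fromBlocks_zero₁₂_eq,
    det_unique (_ : Matrix Unit Unit R), Matrix.mul_assoc, ← replicateCol_mulVec]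
  simp [fromBlocks_mulVec, invOf_eq_nonsing_inv, Matrix.neg_mulVec]
  ring

theorem det_add_vecMulVec {X : Matrix ι ι R} (hX : IsUnit X.det) (u v : ι → R) :
    (X + vecMulVec u v).det = X.det * (1 + v ⬝ᵥ (X⁻¹ *ᵥ u)) := by
  rw [vecMulVec_eq Unit, det_add_replicateCol_mul_replicateRow hX,
    det_unique (_ : Matrix Unit Unit R), dotProduct_mulVec, ← replicateRow_vecMul]
  rfl

end BorderedBlockDiag

section QuadraticPencil

variable {K : Type*} [Field K] {ι : Type*} [Fintype ι] [DecidableEq ι]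

theorem sub_mul_det_eq_det_borderedBlockDiag {M M₁ M₂ : Matrix ι ι K} {e : ι → K} {s x y : K}
    (hM : IsUnit M.det) (hs : s ≠ 0) (hschur : M₂ - M₁ * M⁻¹ * M₁ = s • vecMulVec e e)
    (hA : IsUnit (x • M - M₁).det) (hB : IsUnit (y • M - M₁).det) :
    (x - y) * ((x * y) • M - (x + y) • M₁ + M₂).det =
      (-1) ^ Fintype.card ι * s / M.det *
        (borderedBlockDiag (s⁻¹ * (x - y)) e (x • M - M₁) (y • M - M₁)).det := by
  set A := x • M - M₁
  set B := y • M - M₁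
  have hfactor : (x * y) • M - (x + y) • M₁ + M₂ = A * M⁻¹ * B + vecMulVec (s • e) e := by
    rw [smul_vecMulVec, ← hschur]
    simp only [A, B, Matrix.sub_mul, Matrix.mul_sub, Matrix.smul_mul, Matrix.mul_smul,
      mul_nonsing_inv _ hM, nonsing_inv_mul_cancel_right _ _ hM, Matrix.one_mul]
    module
  have hAMB : IsUnit (A * M⁻¹ * B).det := by
    simp [det_mul, det_nonsing_inv, hA.ne_zero, hB.ne_zero, hM.ne_zero]
  have hinv : (A * M⁻¹ * B)⁻¹ = B⁻¹ * M * A⁻¹ := by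
    rw [Matrix.mul_inv_rev, Matrix.mul_inv_rev, nonsing_inv_nonsing_inv _ hM, Matrix.mul_assoc]
  have hresolvent : (x - y) • (B⁻¹ * M * A⁻¹) = B⁻¹ - A⁻¹ := by
    have : (x - y) • M = A - B := by simp only [A, B]; module
    rw [← Matrix.smul_mul, ← Matrix.mul_smul, this, Matrix.mul_sub, Matrix.sub_mul,
      mul_nonsing_inv_cancel_right _ _ hA, nonsing_inv_mul _ hB, Matrix.one_mul]
  have hquad : (x - y) * (e ⬝ᵥ ((B⁻¹ * M * A⁻¹) *ᵥ e)) =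
      e ⬝ᵥ (B⁻¹ *ᵥ e) - e ⬝ᵥ (A⁻¹ *ᵥ e) := by
    rw [← smul_eq_mul, ← dotProduct_smul, ← smul_mulVec, hresolvent, sub_mulVec, dotProduct_sub]
  rw [hfactor, det_add_vecMulVec hAMB, det_borderedBlockDiag _ _ hA hB, hinv, det_mul, det_mul,
    det_nonsing_inv, Ring.inverse_eq_inv', det_neg, mulVec_smul, dotProduct_smul, smul_eq_mul]
  have hsign : ((-1 : K) ^ Fintype.card ι) ^ 2 = 1 := by rw [← pow_mul, mul_comm, pow_mul]; simp
  linear_combination (A.det * B.det / M.det) * (s * hquad - (x - y) * s * s⁻¹ * hsign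
    - (x - y) * mul_inv_cancel₀ hs - s * (e ⬝ᵥ (B⁻¹ *ᵥ e) - e ⬝ᵥ (A⁻¹ *ᵥ e)) * hsign)

theorem isUnit_det_smul_map_sub_map {k : Type*} [Field k] [Algebra k K] {M N : Matrix ι ι k}
    (hM : M.det ≠ 0) {x : K} (hx : Transcendental k x) :
    IsUnit (x • M.map (algebraMap k K) - N.map (algebraMap k K)).det := by
  set p : k[X] := det ((X : k[X]) • M.map C + (-N).map C)
  have hp : p ≠ 0 := fun h => hM (by rw [← coeff_det_X_add_C_card M (-N)]; simp [p, h])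
  have hx' : aeval x p = (x • M.map (algebraMap k K) - N.map (algebraMap k K)).det := by
    rw [← AlgHom.coe_toRingHom, RingHom.map_det]
    congr 1
    ext i j
    simp [sub_eq_add_neg, mul_comm x]
  exact isUnit_iff_ne_zero.2 fun h => hx ⟨p, hp, hx'.trans h⟩

end QuadraticPencil

section Hankel

variable {K : Type*} [Field K]

def hankel (m : ℕ → K) (d k : ℕ) : Matrix (Fin d) (Fin d) K :=
  of fun i j => m (i + j + k)

theorem det_eq_det_submatrix_castSucc_mul {n : ℕ} (H : Matrix (Fin (n + 1)) (Fin (n + 1)) K)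
    (hA : IsUnit (H.submatrix Fin.castSucc Fin.castSucc).det) :
    H.det = (H.submatrix Fin.castSucc Fin.castSucc).det *
      (H (Fin.last n) (Fin.last n) - ((fun j => H (Fin.last n) j.castSucc) ᵥ*
        (H.submatrix Fin.castSucc Fin.castSucc)⁻¹) ⬝ᵥ fun i => H i.castSucc (Fin.last n)) := by
  have := (H.submatrix Fin.castSucc Fin.castSucc).invertibleOfIsUnitDet hA
  have hblocks : H.submatrix finSumFinEquiv finSumFinEquiv =
      fromBlocks (H.submatrix Fin.castSucc Fin.castSucc)
        (of fun i (_ : Fin 1) => H i.castSucc (Fin.last n))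
        (of fun _ j => H (Fin.last n) j.castSucc) (of fun _ _ => H (Fin.last n) (Fin.last n)) := by
    ext (i | i) (j | j) <;> simp [fromBlocks, Fin.fin_one_eq_zero] <;> rfl
  rw [← det_submatrix_equiv_self finSumFinEquiv, hblocks, det_fromBlocks₁₁, det_fin_one,
    invOf_eq_nonsing_inv]
  rfl

theorem hankel_schurComplement_eq_vecMulVec (m : ℕ → K) (n : ℕ)
    (h : IsUnit (hankel m (n + 1) 0).det) :
    hankel m (n + 1) 2 - hankel m (n + 1) 1 * (hankel m (n + 1) 0)⁻¹ * hankel m (n + 1) 1 =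
      ((hankel m (n + 2) 0).det / (hankel m (n + 1) 0).det) •
        vecMulVec (Pi.single (Fin.last n) 1) (Pi.single (Fin.last n) 1) := by
  set M := hankel m (n + 1) 0
  set M₁ := hankel m (n + 1) 1
  have hrow (i : Fin n) (k) : M₁ i.castSucc k = M i.succ k := by
    simp only [M, M₁, hankel, of_apply, Fin.val_castSucc, Fin.val_succ]; ring_nf
  have hcol (j : Fin n) (k) : M₁ k j.castSucc = M k j.succ := by
    simp only [M, M₁, hankel, of_apply, Fin.val_castSucc, Fin.val_succ]; ring_nf
  ext i j
  cases i using Fin.lastCases with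
  | cast i =>
    have : (M₁ * (M⁻¹ * M₁)) i.castSucc j = M₁ i.succ j := by
      simp_rw [mul_apply, hrow, ← mul_apply, mul_nonsing_inv_cancel_left _ _ h]
    rw [Matrix.sub_apply, Matrix.mul_assoc, this]
    simp [M₁, hankel, vecMulVec, Fin.castSucc_ne_last]
    ring_nf
  | last =>
    cases j using Fin.lastCases with
    | cast j =>
      have : (M₁ * M⁻¹ * M₁) (Fin.last n) j.castSucc = M₁ (Fin.last n) j.succ := by
        simp_rw [mul_apply, hcol, ← mul_apply, nonsing_inv_mul_cancel_right _ _ h]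
      rw [Matrix.sub_apply, this]
      simp [M₁, hankel, vecMulVec, Fin.castSucc_ne_last]
      ring_nf
    | last =>
      have hΔ := det_eq_det_submatrix_castSucc_mul (hankel m (n + 2) 0) h
      have hr : (fun j => hankel m (n + 2) 0 (Fin.last (n + 1)) j.castSucc) = M₁ (Fin.last n) := by
        ext j; simp [M₁, hankel]; ring_nf
      have hc : (fun i => hankel m (n + 2) 0 i.castSucc (Fin.last (n + 1))) =
          fun i => M₁ i (Fin.last n) := by
        ext i; simp [M₁, hankel]; ring_nf
      have hsub : (hankel m (n + 2) 0).submatrix Fin.castSucc Fin.castSucc = M := rfl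
      rw [hsub, hr, hc] at hΔ
      change hankel m (n + 1) 2 _ _ - (M₁ (Fin.last n) ᵥ* M⁻¹) ⬝ᵥ (fun i => M₁ i (Fin.last n)) = _
      rw [hΔ, mul_div_cancel_left₀ _ h.ne_zero]
      simp [hankel, vecMulVec_apply]
      ring_nf

theorem sub_mul_det_hankel_eq_det_borderedBlockDiag (m : ℕ → K) (n : ℕ)
    (hδ : IsUnit (hankel m (n + 1) 0).det) (hΔ : (hankel m (n + 2) 0).det ≠ 0) {x y : K}
    (hA : IsUnit (x • hankel m (n + 1) 0 - hankel m (n + 1) 1).det)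
    (hB : IsUnit (y • hankel m (n + 1) 0 - hankel m (n + 1) 1).det) :
    (x - y) * ((x * y) • hankel m (n + 1) 0 - (x + y) • hankel m (n + 1) 1 +
        hankel m (n + 1) 2).det =
      (-1) ^ (n + 1) * (hankel m (n + 2) 0).det / (hankel m (n + 1) 0).det ^ 2 *
        (borderedBlockDiag ((hankel m (n + 1) 0).det / (hankel m (n + 2) 0).det * (x - y))
          (Pi.single (Fin.last n) 1) (x • hankel m (n + 1) 0 - hankel m (n + 1) 1)
          (y • hankel m (n + 1) 0 - hankel m (n + 1) 1)).det := by
  rw [sub_mul_det_eq_det_borderedBlockDiag hδ (div_ne_zero hΔ hδ.ne_zero)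
    (hankel_schurComplement_eq_vecMulVec m n hδ) hA hB, Fintype.card_fin, inv_div]
  ring

end Hankel

open MvPolynomial in
/-- The linear determinantal representation: with
F(x,y) = det(xy M_{d-1} - (x+y) M'_{d-1} + M''_{d-1}) and
c = (-1)^d det(M_d)/det(M_{d-1})², the identity
(x − y)·F = c · det [[(det M_{d-1}/det M_d)(x−y), e_d^T, e_d^T],
[e_d, x M_{d-1} − M'_{d-1}, 0], [e_d, 0, −y M_{d-1} + M'_{d-1}]]
holds in ℝ[x,y]. -/
theorem stmt16 (μ : Measure ℝ) (d : ℕ) (hd : 1 ≤ d) (hnd : NonDeg μ d) :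
    ((MvPolynomial.X 0 - MvPolynomial.X 1 : MvPolynomial (Fin 2) ℝ)) *
      (Matrix.det (Matrix.of fun i j : Fin d =>
        (MvPolynomial.X 0 * MvPolynomial.X 1 * MvPolynomial.C (mom μ ((i : ℕ) + (j : ℕ)))
          - (MvPolynomial.X 0 + MvPolynomial.X 1) *
              MvPolynomial.C (mom μ ((i : ℕ) + (j : ℕ) + 1))
          + MvPolynomial.C (mom μ ((i : ℕ) + (j : ℕ) + 2)) : MvPolynomial (Fin 2) ℝ)))
    = MvPolynomial.C ((-1 : ℝ) ^ d * (hank μ (d + 1) 0).det / ((hank μ d 0).det) ^ 2) *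
      Matrix.det (Matrix.of
        (show (Unit ⊕ Fin d ⊕ Fin d) → (Unit ⊕ Fin d ⊕ Fin d) → MvPolynomial (Fin 2) ℝ from
          fun a b =>
          match a, b with
          | Sum.inl _, Sum.inl _ =>
              MvPolynomial.C ((hank μ d 0).det / (hank μ (d + 1) 0).det) *
                (MvPolynomial.X 0 - MvPolynomial.X 1)
          | Sum.inl _, Sum.inr (Sum.inl j) => if (j : ℕ) + 1 = d then 1 else 0
          | Sum.inl _, Sum.inr (Sum.inr j) => if (j : ℕ) + 1 = d then 1 else 0
          | Sum.inr (Sum.inl i), Sum.inl _ => if (i : ℕ) + 1 = d then 1 else 0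
          | Sum.inr (Sum.inl i), Sum.inr (Sum.inl j) =>
              MvPolynomial.X 0 * MvPolynomial.C (mom μ ((i : ℕ) + (j : ℕ)))
                - MvPolynomial.C (mom μ ((i : ℕ) + (j : ℕ) + 1))
          | Sum.inr (Sum.inl _), Sum.inr (Sum.inr _) => 0
          | Sum.inr (Sum.inr i), Sum.inl _ => if (i : ℕ) + 1 = d then 1 else 0
          | Sum.inr (Sum.inr _), Sum.inr (Sum.inl _) => 0
          | Sum.inr (Sum.inr i), Sum.inr (Sum.inr j) =>
              - (MvPolynomial.X 1 * MvPolynomial.C (mom μ ((i : ℕ) + (j : ℕ))))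
                + MvPolynomial.C (mom μ ((i : ℕ) + (j : ℕ) + 1)))) := by
  obtain ⟨n, rfl⟩ : ∃ n, d = n + 1 := ⟨d - 1, by omega⟩
  set R := MvPolynomial (Fin 2) ℝ
  set K := FractionRing R
  set m : ℕ → K := fun k => algebraMap ℝ K (mom μ k)
  have hC (c : ℝ) : algebraMap R K (MvPolynomial.C c) = algebraMap ℝ K c :=
    (IsScalarTower.algebraMap_apply ℝ R K c).symm
  have hdet (d k : ℕ) : (hankel m d k).det = algebraMap ℝ K (hank μ d k).det :=
    (RingHom.map_det _ _).symm
  have hδ := (hank_posDef hnd (n := n + 1) (by omega)).det_pos.ne'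
  have hΔ := (hank_posDef hnd (n := n + 2) le_rfl).det_pos.ne'
  have hpencil (i : Fin 2) :
      IsUnit (algebraMap R K (MvPolynomial.X i) • hankel m (n + 1) 0 - hankel m (n + 1) 1).det :=
    isUnit_det_smul_map_sub_map hδ
      ((transcendental_algebraMap_iff (IsFractionRing.injective R K)).2 (transcendental_X ℝ i))
  apply IsFractionRing.injective R K
  rw [map_mul, map_mul, RingHom.map_det, RingHom.map_det]
  convert sub_mul_det_hankel_eq_det_borderedBlockDiag m n (by simpa [hdet] using hδ)
    (by simpa [hdet] using hΔ) (hpencil 0) (hpencil 1) using 2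
  · exact map_sub _ _ _
  · congr 1
    ext i j
    simp [hC, hankel, m]
  · simp [hC, hdet]
  · congr 1
    ext (a | a | a) (b | b | b) <;>
      simp [hC, hdet, borderedBlockDiag, Pi.single_apply, Fin.ext_iff] <;>
      simp [hankel, m, Algebra.smul_def, neg_add_eq_sub]
end

section
/- Let μ be a measure on ℝ non-degenerate in degree n+2ℓ for integers n, ℓ ≥ 0, and let x_1,…,x_n ∈ ℝ be distinct. If there exists a quadrature rule for μ of degree n+2ℓ with nodes x_1,…,x_n, r_{n+1},…,r_{n+ℓ} ∈ ℝ ∪ {∞}, then det( Σ_{k=0}^n (−1)^k e_k(x_1,…,x_n) M_ℓ^{(n−k)} ) = 0, where M_ℓ^{(k)} = (m_{i+j+k−2})_{1≤i,j≤ℓ+1} and e_k is the k-th elementary symmetric polynomial. -/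
open MeasureTheory Polynomial

/-!
Let `P = ∏ (X - x i) = ∑ (-1)^k e_k X^(n-k)` and let `L` be the moment functional of `μ`; the
matrix is then `(L (X^i * X^j * P))_{i,j ≤ ℓ}`. For `deg f ≤ 2ℓ` the quadrature rule computes
`L (f * P)`, and `P` vanishes at the nodes `x i`, so only the `ℓ` extra nodes contribute. The monic
polynomial `p` vanishing at the finite extra nodes has degree at most `ℓ`, and less than `ℓ` when
`∞` is a node. Hence every extra node kills `X^i * p * P` (the node `∞` because the degree stays
below `n + 2ℓ`), and the coefficient vector of `p` is a nonzero kernel vector of the matrix.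
-/

open Finset Matrix

theorem Finset.prod_X_sub_C_eq_sum_esymm {R ι : Type*} [CommRing R] [Fintype ι] (x : ι → R) :
    ∏ i, (X - C (x i)) = ∑ k ∈ range (Fintype.card ι + 1),
      C ((-1) ^ k * ∑ S ∈ univ.powersetCard k, ∏ i ∈ S, x i) * X ^ (Fintype.card ι - k) := by
  have h := Multiset.prod_X_sub_X_eq_sum_esymm (univ.val.map x)
  rw [Multiset.map_map, Multiset.card_map, card_val, card_univ] at h
  rw [prod_eq_multiset_prod, ← Function.comp_def (fun t => X - C t) x, h]
  refine sum_congr rfl fun k _ => ?_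
  rw [Finset.esymm_map_val, map_mul, map_pow, map_neg, map_one, mul_assoc]

theorem LinearMap.apply_eq_of_forall_X_pow {R M : Type*} [CommSemiring R] [AddCommMonoid M]
    [Module R M] {Λ₁ Λ₂ : R[X] →ₗ[R] M} {D : ℕ} (h : ∀ m ≤ D, Λ₁ (X ^ m) = Λ₂ (X ^ m))
    {f : R[X]} (hf : f.natDegree ≤ D) : Λ₁ f = Λ₂ f := by
  rw [f.as_sum_range' (D + 1) (by omega)]
  simp only [map_sum, ← smul_X_eq_monomial, map_smul]
  exact sum_congr rfl fun m hm => by rw [h m (Nat.lt_succ_iff.mp (Finset.mem_range.mp hm))]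

theorem Matrix.of_X_pow_mul_X_pow_mul_mulVec_coeff {R : Type*} [CommSemiring R] (Λ : R[X] →ₗ[R] R) (P : R[X])
    {d : ℕ} {p : R[X]} (hp : p.natDegree < d) :
    (of fun i j : Fin d => Λ (X ^ (i : ℕ) * X ^ (j : ℕ) * P)) *ᵥ (fun j => p.coeff j) =
      fun i : Fin d => Λ (X ^ (i : ℕ) * p * P) := by
  ext i
  conv_rhs => rw [p.as_sum_range' d hp, ← Fin.sum_univ_eq_sum_range]
  simp only [mulVec, dotProduct, of_apply, mul_sum, map_sum,
    ← smul_X_eq_monomial, mul_smul_comm, map_smul, smul_eq_mul, mul_comm]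

theorem Polynomial.natDegree_X_pow_mul_mul_le {R : Type*} [Semiring R] (i : ℕ) (p q : R[X]) :
    (X ^ i * p * q).natDegree ≤ i + p.natDegree + q.natDegree :=
  natDegree_mul_le_of_le (natDegree_mul_le_of_le (natDegree_X_pow_le i) le_rfl) le_rfl

theorem Polynomial.coeff_fun_ne_zero {R : Type*} [Semiring R] {p : R[X]} (hp : p ≠ 0) {d : ℕ}
    (hd : p.natDegree < d) : (fun j : Fin d => p.coeff j) ≠ 0 := fun h =>
  hp (leadingCoeff_eq_zero.mp (congr_fun h ⟨p.natDegree, hd⟩))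

section Nodes

variable {R ι : Type*} [CommRing R] [Fintype ι]

noncomputable def nodePoly (r : ι → Option R) : R[X] :=
  ∏ q, (r q).elim 1 fun a => X - C a

theorem nodePoly_monic (r : ι → Option R) : (nodePoly r).Monic :=
  monic_prod_of_monic _ _ fun q _ => by cases r q <;> simp [monic_X_sub_C]

theorem eval_nodePoly_eq_zero {r : ι → Option R} {q : ι} {a : R} (h : r q = some a) :
    (nodePoly r).eval a = 0 := by
  rw [nodePoly, eval_prod]
  exact prod_eq_zero (mem_univ q) (by simp [h])

theorem natDegree_nodePoly_le (r : ι → Option R) :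
    (nodePoly r).natDegree ≤ Fintype.card ι :=
  (natDegree_prod_le _ _).trans <| (sum_le_sum (g := fun _ => 1) fun q _ => by
    cases r q <;> simp [natDegree_X_le]).trans (by simp)

theorem natDegree_nodePoly_lt {r : ι → Option R} {q : ι} (h : r q = none) :
    (nodePoly r).natDegree < Fintype.card ι := by
  refine (natDegree_prod_le _ _).trans_lt <|
    (sum_lt_sum (g := fun _ => 1) (fun q _ => ?_) ⟨q, mem_univ q, ?_⟩).trans_eq (by simp)
  · cases r q <;> simp [natDegree_X_le]
  · simp [h]

end Nodes

/-- Unlike `f ↦ ∫ t, f.eval t ∂μ`, this is linear without any integrability assumption. -/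
noncomputable def momentFunctional (μ : Measure ℝ) : ℝ[X] →ₗ[ℝ] ℝ :=
  lsum fun m => LinearMap.mulRight ℝ (mom μ m)

theorem momentFunctional_C_mul_X_pow (μ : Measure ℝ) (a : ℝ) (m : ℕ) :
    momentFunctional μ (C a * X ^ m) = a * mom μ m := by
  rw [C_mul_X_pow_eq_monomial, momentFunctional, lsum_apply, sum_monomial_index] <;> simp

theorem momentFunctional_X_pow (μ : Measure ℝ) (m : ℕ) :
    momentFunctional μ (X ^ m) = mom μ m := by
  simpa using momentFunctional_C_mul_X_pow μ 1 m

theorem sum_smul_hank_eq (μ : Measure ℝ) (d n : ℕ) (c : ℕ → ℝ) :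
    ∑ k ∈ range (n + 1), c k • hank μ d (n - k) = of fun i j : Fin d => momentFunctional μ
      (X ^ (i : ℕ) * X ^ (j : ℕ) * ∑ k ∈ range (n + 1), C (c k) * X ^ (n - k)) := by
  ext i j
  simp only [Matrix.sum_apply, Matrix.smul_apply, hank, of_apply, mul_sum, map_sum, smul_eq_mul]
  refine sum_congr rfl fun k _ => ?_
  rw [← momentFunctional_C_mul_X_pow, ← pow_add, pow_add _ _ (n - k)]
  ring_nf

noncomputable def lev (D : ℕ) (o : Option ℝ) : ℝ[X] →ₗ[ℝ] ℝ :=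
  o.elim (lcoeff ℝ D) leval

theorem lev_apply (D : ℕ) (o : Option ℝ) (f : ℝ[X]) : lev D o f = ev D o f := by
  cases o <;> rfl

theorem momentFunctional_eq_quadrature {ι κ : Type*} [Fintype ι] [Fintype κ] {μ : Measure ℝ}
    {D : ℕ} {x : ι → ℝ} {r : κ → Option ℝ} {wx : ι → ℝ} {wr : κ → ℝ}
    (hq : ∀ f : ℝ[X], f.natDegree ≤ D →
      ∫ t, f.eval t ∂μ = ∑ i, wx i * f.eval (x i) + ∑ j, wr j * ev D (r j) f)
    {f : ℝ[X]} (hf : f.natDegree ≤ D) :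
    momentFunctional μ f = ∑ i, wx i * f.eval (x i) + ∑ j, wr j * ev D (r j) f := by
  let Q : ℝ[X] →ₗ[ℝ] ℝ := ∑ i, wx i • leval (x i) + ∑ j, wr j • lev D (r j)
  have hQ (g : ℝ[X]) : Q g = ∑ i, wx i * g.eval (x i) + ∑ j, wr j * ev D (r j) g := by
    simp [Q, lev_apply]
  rw [← hQ]
  refine LinearMap.apply_eq_of_forall_X_pow (fun m hm => ?_) hf
  rw [hQ, ← hq _ (by simpa using hm), momentFunctional_X_pow]
  simp [mom]

theorem ev_X_pow_mul_nodePoly_mul_eq_zero {n l i : ℕ} (hi : i ≤ l) {P : ℝ[X]}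
    (hP : P.natDegree ≤ n) (r : Fin l → Option ℝ) (q : Fin l) :
    ev (n + 2 * l) (r q) (X ^ i * nodePoly r * P) = 0 := by
  cases h : r q with
  | none =>
    have hr := natDegree_nodePoly_lt h
    have hdeg := natDegree_X_pow_mul_mul_le i (nodePoly r) P
    rw [Fintype.card_fin] at hr
    show (X ^ i * nodePoly r * P).coeff (n + 2 * l) = 0
    exact coeff_eq_zero_of_natDegree_lt (by omega)
  | some a => simp [ev, eval_nodePoly_eq_zero h]

theorem stmt18_general (μ : Measure ℝ) (n l : ℕ)
    (x : Fin n → ℝ)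
    (r : Fin l → Option ℝ)
    (wx : Fin n → ℝ) (wr : Fin l → ℝ)
    (hq : ∀ f : Polynomial ℝ, f.natDegree ≤ n + 2 * l →
      ∫ t, f.eval t ∂μ
        = ∑ i, wx i * f.eval (x i) + ∑ j, wr j * ev (n + 2 * l) (r j) f) :
    (∑ k ∈ Finset.range (n + 1),
      ((-1 : ℝ) ^ k * ∑ S ∈ Finset.univ.powersetCard k, ∏ i ∈ S, x i) •
        hank μ (l + 1) (n - k)).det = 0 := by
  set P : ℝ[X] := ∏ i, (X - C (x i)) with hP
  have hPdeg : P.natDegree ≤ n := (natDegree_prod_le _ _).trans (by simp)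
  have hPx (p : Fin n) : P.eval (x p) = 0 := by
    rw [eval_prod]
    exact prod_eq_zero (mem_univ p) (by simp)
  have hnode : (nodePoly r).natDegree ≤ l := by simpa using natDegree_nodePoly_le r
  have hVieta := Finset.prod_X_sub_C_eq_sum_esymm x
  rw [← hP, Fintype.card_fin] at hVieta
  rw [sum_smul_hank_eq, ← hVieta, ← exists_mulVec_eq_zero_iff]
  refine ⟨_, coeff_fun_ne_zero (nodePoly_monic r).ne_zero (Nat.lt_succ_of_le hnode), ?_⟩
  rw [of_X_pow_mul_X_pow_mul_mulVec_coeff _ _ (Nat.lt_succ_of_le hnode)]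
  ext i
  have hi : (i : ℕ) ≤ l := Nat.lt_succ_iff.mp i.2
  rw [momentFunctional_eq_quadrature hq ?_]
  · simp [hPx, ev_X_pow_mul_nodePoly_mul_eq_zero hi hPdeg]
  · exact (natDegree_X_pow_mul_mul_le _ _ _).trans (by omega)

/-- If μ is non-degenerate in degree n+2ℓ, x₁,…,x_n ∈ ℝ are distinct, and there is a
quadrature rule for μ of degree n+2ℓ whose distinct nodes are x₁,…,x_n together with
ℓ further nodes in ℝ ∪ {∞}, then det(Σ_{k=0}^n (−1)^k e_k(x) M_ℓ^{(n−k)}) = 0, where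
M_ℓ^{(m)} = (m_{i+j+m−2})_{1≤i,j≤ℓ+1} and e_k is the k-th elementary symmetric polynomial. -/
theorem stmt18 (μ : Measure ℝ) (n l : ℕ) (hnd : NonDeg μ (n + 2 * l))
    (x : Fin n → ℝ) (hx : Function.Injective x)
    (r : Fin l → Option ℝ) (hrinj : Function.Injective r)
    (hdist : ∀ i j, some (x i) ≠ r j)
    (wx : Fin n → ℝ) (wr : Fin l → ℝ)
    (hwx : ∀ i, 0 < wx i) (hwr : ∀ j, 0 < wr j)
    (hq : ∀ f : Polynomial ℝ, f.natDegree ≤ n + 2 * l →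
      ∫ t, f.eval t ∂μ
        = ∑ i, wx i * f.eval (x i) + ∑ j, wr j * ev (n + 2 * l) (r j) f) :
    (∑ k ∈ Finset.range (n + 1),
      ((-1 : ℝ) ^ k * ∑ S ∈ Finset.univ.powersetCard k, ∏ i ∈ S, x i) •
        hank μ (l + 1) (n - k)).det = 0 :=
  stmt18_general μ n l x r wx wr hq
end
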